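/- arXiv:2204.02909 — 2 statements merged into one kernel-verified Lean document; each statement's English description precedes it below -/
import Mathlib

section
/- Let Q be the r×r matrix with diagonal 1, equal to q₁ on off-diagonal entries within each of the r/m blocks of a partition of {1,...,r} into blocks of size m, and q₀ elsewhere. Then Tr log Q = log(1+(m-1)q₁+(r-m)q₀) + (r/m − 1)·log(1−q₁+m(q₁−q₀)) + (r/m)(m−1)·log(1−q₁), provided all three arguments of the logarithms are positive. -/
open Matrix

lemma det_smul_one_add_const (n : ℕ) (hn : 0 < n) (a b : ℝ) (ha : a ≠ 0) :
    (a • (1 : Matrix (Fin n) (Fin n) ℝ)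
      + Matrix.replicateCol Unit (fun _ => b) * Matrix.replicateRow Unit (fun _ => (1 : ℝ))).det
      = a ^ (n - 1) * (a + n * b) := by
  have hdet : (a • (1 : Matrix (Fin n) (Fin n) ℝ)).det = a ^ n := by
    simp [Matrix.det_smul]
  have hA : IsUnit (a • (1 : Matrix (Fin n) (Fin n) ℝ)).det := by
    rw [hdet]; exact (pow_ne_zero n ha).isUnit
  have hinv : (a • (1 : Matrix (Fin n) (Fin n) ℝ))⁻¹ = a⁻¹ • 1 := by
    apply Matrix.inv_eq_right_inv
    rw [smul_mul_smul_comm, mul_inv_cancel₀ ha, one_mul, one_smul]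
  rw [Matrix.det_add_replicateCol_mul_replicateRow hA, hdet, hinv, Matrix.det_unique]
  simp [Matrix.mul_apply, Matrix.one_apply, Finset.mul_sum, Finset.sum_ite_eq]
  have hpow : a ^ n = a ^ (n - 1) * a := by
    rw [← pow_succ, Nat.sub_add_cancel hn]
  rw [hpow]
  field_simp

theorem stmt1 (k m : ℕ) (hk : 0 < k) (hm : 0 < m) (q₀ q₁ : ℝ)
    (Q : Matrix (Fin k × Fin m) (Fin k × Fin m) ℝ)
    (hQ : ∀ a b, Q a b = if a = b then 1 else if a.1 = b.1 then q₁ else q₀)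
    (h1 : 0 < 1 + ((m : ℝ) - 1) * q₁ + ((k : ℝ) * m - m) * q₀)
    (h2 : 0 < 1 - q₁ + (m : ℝ) * (q₁ - q₀))
    (h3 : 0 < 1 - q₁) :
    Real.log Q.det =
      Real.log (1 + ((m : ℝ) - 1) * q₁ + ((k : ℝ) * m - m) * q₀)
        + ((k : ℝ) - 1) * Real.log (1 - q₁ + (m : ℝ) * (q₁ - q₀))
        + (k : ℝ) * ((m : ℝ) - 1) * Real.log (1 - q₁) := by
  set s : ℝ := 1 - q₁ + (m : ℝ) * (q₁ - q₀) with hs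
  set t : ℝ := 1 + ((m : ℝ) - 1) * q₁ + ((k : ℝ) * m - m) * q₀ with ht
  have ha : (1 - q₁ : ℝ) ≠ 0 := ne_of_gt h3
  have hsne : s ≠ 0 := ne_of_gt h2
  -- the block matrix
  set A : Matrix (Fin m) (Fin m) ℝ :=
    (1 - q₁) • (1 : Matrix (Fin m) (Fin m) ℝ)
      + Matrix.replicateCol Unit (fun _ => q₁ - q₀) * Matrix.replicateRow Unit (fun _ => (1 : ℝ)) with hA
  have hAapp : ∀ i j, A i j = (if i = j then (1 : ℝ) - q₁ else 0) + (q₁ - q₀) := by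
    intro i j
    simp [hA, Matrix.one_apply, Matrix.mul_apply]
  have hdetA : A.det = (1 - q₁) ^ (m - 1) * s := by
    rw [hA, det_smul_one_add_const m hm _ _ ha, hs]
  -- the block-diagonal matrix
  set D : Matrix (Fin k × Fin m) (Fin k × Fin m) ℝ :=
    (Matrix.blockDiagonal (fun _ : Fin k => A)).submatrix
      (Equiv.prodComm (Fin k) (Fin m)) (Equiv.prodComm (Fin k) (Fin m)) with hD
  have hDapp : ∀ a b : Fin k × Fin m,
      D a b = if a.1 = b.1 then A a.2 b.2 else 0 := by
    intro a b
    simp [hD, Matrix.blockDiagonal_apply, eq_comm]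
  have hdetD : D.det = ((1 - q₁) ^ (m - 1) * s) ^ k := by
    rw [hD, Matrix.det_submatrix_equiv_self, Matrix.det_blockDiagonal]
    simp [hdetA]
  have hdetDne : D.det ≠ 0 := by
    rw [hdetD]
    exact pow_ne_zero _ (mul_ne_zero (pow_ne_zero _ ha) hsne)
  have hDunit : IsUnit D.det := hdetDne.isUnit
  -- Q as rank-one perturbation of D
  have hQD : Q = D + Matrix.replicateCol Unit (fun _ => (1 : ℝ)) * Matrix.replicateRow Unit (fun _ => q₀) := by
    ext a b
    rw [hQ a b]
    simp only [Matrix.add_apply, Matrix.mul_apply, hDapp, hAapp]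
    by_cases h : a = b
    · subst h; simp
    · by_cases h' : a.1 = b.1
      · have h2' : a.2 ≠ b.2 := fun hh => h (Prod.ext h' hh)
        simp [h, h', h2']
      · simp [h, h']
  -- row sums of D
  have hDone : D *ᵥ (fun _ => (1 : ℝ)) = fun _ => s := by
    funext a
    simp only [Matrix.mulVec, dotProduct, mul_one]
    rw [Fintype.sum_prod_type]
    have : ∀ b1 : Fin k, ∑ b2 : Fin m, D a (b1, b2)
        = if a.1 = b1 then ((1 : ℝ) - q₁) + m * (q₁ - q₀) else 0 := by
      intro b1
      by_cases h : a.1 = b1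
      · simp only [hDapp, h, if_pos rfl]
        simp [hAapp, Finset.sum_add_distrib, Finset.sum_ite_eq, mul_comm]
        ring
      · simp [hDapp, h]
    simp only [this]
    simp [Finset.sum_ite_eq, hs]
  have hDinvone : D⁻¹ *ᵥ (fun _ => (1 : ℝ)) = fun _ => s⁻¹ := by
    have h1' : D⁻¹ *ᵥ (D *ᵥ (fun _ => (1:ℝ))) = fun _ => (1:ℝ) := by
      rw [Matrix.mulVec_mulVec, Matrix.nonsing_inv_mul D hDunit, Matrix.one_mulVec]
    rw [hDone] at h1'
    have : (fun _ : Fin k × Fin m => s) = s • (fun _ : Fin k × Fin m => (1:ℝ)) := by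
      funext x; simp
    rw [this, Matrix.mulVec_smul] at h1'
    funext x
    have := congrFun h1' x
    simp only [Pi.smul_apply, smul_eq_mul] at this
    have hx : (D⁻¹ *ᵥ fun _ => (1:ℝ)) x = s⁻¹ := by
      field_simp at this ⊢
      linarith [this]
    exact hx
  -- determinant of Q
  have hdetQ : Q.det = t * s ^ (k - 1) * (1 - q₁) ^ (k * (m - 1)) := by
    rw [hQD, Matrix.det_add_replicateCol_mul_replicateRow hDunit, hdetD]
    have hcol : @HMul.hMul _ _ _ Matrix.instHMulOfFintypeOfMulOfAddCommMonoid D⁻¹ (Matrix.replicateCol Unit (fun _ => (1:ℝ)))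
        = Matrix.replicateCol Unit (fun _ => s⁻¹) := by
      rw [← Matrix.replicateCol_mulVec, hDinvone]
    rw [Matrix.mul_assoc, hcol, Matrix.det_unique]
    simp only [Pi.add_apply, Matrix.one_apply_eq, Matrix.replicateRow_mul_replicateCol_apply, Matrix.add_apply]
    have hdot : (fun _ : Fin k × Fin m => q₀) ⬝ᵥ (fun _ => s⁻¹)
        = (k * m : ℝ) * q₀ * s⁻¹ := by
      simp [dotProduct, Finset.sum_const]
      ring
    rw [hdot]
    have hsk : s ^ k = s ^ (k - 1) * s := by
      rw [← pow_succ, Nat.sub_add_cancel hk]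
    have hts : t = s + (k * m : ℝ) * q₀ := by
      rw [ht, hs]; ring
    rw [mul_pow, ← pow_mul, hsk, hts]
    field_simp
    ring
  rw [hdetQ]
  rw [Real.log_mul (by positivity) (by positivity),
      Real.log_mul (ne_of_gt h1) (by positivity),
      Real.log_pow, Real.log_pow]
  have hk1 : ((k - 1 : ℕ) : ℝ) = (k : ℝ) - 1 := by
    rw [Nat.cast_sub hk]; simp
  have hkm1 : ((k * (m - 1) : ℕ) : ℝ) = (k : ℝ) * ((m : ℝ) - 1) := by
    rw [Nat.cast_mul, Nat.cast_sub hm]; simp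
  rw [hk1, hkm1]
end

section
/- Moment integrability of the Poisson exponential sum: for a Poisson point process {x_α} with intensity m·e^{−mx}dx on ℝ and any 0 < a < m ≤ 1, E[(Σ_α e^{x_α})^a] < ∞. In particular E[(Σ_α e^{x_α})^a] ≤ m/(m−a) + 1 + m/(1−m) when m < 1. -/
open MeasureTheory Set ProbabilityTheory

noncomputable def ppCount {Ω : Type*} (x : Ω → ℕ → ℝ) (B : Set ℝ) (ω : Ω) : ℕ∞ :=
  {α : ℕ | x ω α ∈ B}.encard

/-- `x` enumerates the points of a Poisson point process with intensity measure `Λ`,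
under the probability measure `P`: counts on Borel sets are Poisson distributed with the
corresponding mean, and counts on disjoint sets are independent. -/
structure IsPoissonPP {Ω : Type*} [MeasurableSpace Ω] (P : Measure Ω)
    (x : Ω → ℕ → ℝ) (Λ : Measure ℝ) : Prop where
  meas : ∀ α : ℕ, Measurable fun ω => x ω α
  law : ∀ B : Set ℝ, MeasurableSet B → Λ B ≠ ⊤ → ∀ k : ℕ,
    P {ω | ppCount x B ω = (k : ℕ∞)} =
      ENNReal.ofReal (Real.exp (-(Λ B).toReal) * (Λ B).toReal ^ k / (Nat.factorial k))
  indep : ∀ B₁ B₂ : Set ℝ, MeasurableSet B₁ → MeasurableSet B₂ → Disjoint B₁ B₂ →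
    ∀ k₁ k₂ : ℕ∞,
      P ({ω | ppCount x B₁ ω = k₁} ∩ {ω | ppCount x B₂ ω = k₂}) =
        P {ω | ppCount x B₁ ω = k₁} * P {ω | ppCount x B₂ ω = k₂}

/-- The intensity measure `e^{-m x} dx` on the real line. -/
noncomputable def expIntensity (m : ℝ) : Measure ℝ :=
  volume.withDensity fun t => ENNReal.ofReal (Real.exp (-(m * t)))

/-- The intensity measure `m e^{-m x} dx` on the real line. -/
noncomputable def expIntensityM (m : ℝ) : Measure ℝ :=
  volume.withDensity fun t => ENNReal.ofReal (m * Real.exp (-(m * t)))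

section Aux

open scoped ENNReal NNReal

noncomputable def Ncnt {Ω : Type*} (x : Ω → ℕ → ℝ) (B : Set ℝ) (ω : Ω) : ℝ≥0∞ :=
  ∑' α : ℕ, B.indicator (fun _ => (1 : ℝ≥0∞)) (x ω α)

lemma Ncnt_eq_ppCount {Ω : Type*} (x : Ω → ℕ → ℝ) (B : Set ℝ) (ω : Ω) :
    Ncnt x B ω = (ppCount x B ω : ℝ≥0∞) := by
  rw [ppCount, ← ENNReal.tsum_set_one,
    tsum_subtype {α | x ω α ∈ B} (fun _ => (1 : ℝ≥0∞))]
  unfold Ncnt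
  refine tsum_congr fun α => ?_
  by_cases h : x ω α ∈ B <;>
    simp [Set.indicator_of_mem, Set.indicator_of_notMem, h]

lemma measurable_Ncnt {Ω : Type*} [MeasurableSpace Ω] {x : Ω → ℕ → ℝ}
    (hx : ∀ α, Measurable fun ω => x ω α) {B : Set ℝ} (hB : MeasurableSet B) :
    Measurable (Ncnt x B) :=
  Measurable.ennreal_tsum fun α =>
    (measurable_const.indicator hB).comp (hx α)

lemma ppCount_event_eq {Ω : Type*} (x : Ω → ℕ → ℝ) (B : Set ℝ) (k : ℕ) :
    {ω | ppCount x B ω = (k : ℕ∞)} = Ncnt x B ⁻¹' {(k : ℝ≥0∞)} := by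
  ext ω
  simp only [Set.mem_setOf_eq, Set.mem_preimage, Set.mem_singleton_iff, Ncnt_eq_ppCount,
    ← ENat.toENNReal_coe (n := k), ENat.toENNReal_inj]

lemma poisson_mean (r : ℝ≥0) :
    ∑' k : ℕ, (k : ℝ≥0∞) * ENNReal.ofReal (poissonPMFReal r k) = (r : ℝ≥0∞) := by
  have hs : HasSum (fun k : ℕ => (k : ℝ) * poissonPMFReal r k) (r : ℝ) := by
    have h := (poissonPMFRealSum r).mul_left (r : ℝ)
    rw [mul_one] at h
    have heq : (fun k : ℕ => ((k + 1 : ℕ) : ℝ) * poissonPMFReal r (k + 1)) =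
        fun k : ℕ => (r : ℝ) * poissonPMFReal r k := by
      funext k
      have hkf : ((k + 1).factorial : ℝ) = (k + 1) * k.factorial := by
        rw [Nat.factorial_succ]; push_cast; ring
      have hfk : (k.factorial : ℝ) ≠ 0 := Nat.cast_ne_zero.mpr k.factorial_ne_zero
      simp only [poissonPMFReal, hkf]
      push_cast
      rw [pow_succ]
      field_simp
    refine (hasSum_nat_add_iff' 1).mp ?_
    simp only [Finset.range_one, Finset.sum_singleton, Nat.cast_zero, zero_mul, sub_zero]
    rw [show (fun n : ℕ => (↑(n + 1) : ℝ) * poissonPMFReal r (n + 1)) =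
      fun k : ℕ => (r : ℝ) * poissonPMFReal r k from heq]
    exact h
  calc ∑' k : ℕ, (k : ℝ≥0∞) * ENNReal.ofReal (poissonPMFReal r k)
      = ∑' k : ℕ, ENNReal.ofReal ((k : ℝ) * poissonPMFReal r k) := by
        refine tsum_congr fun k => ?_
        rw [ENNReal.ofReal_mul (by positivity), ENNReal.ofReal_natCast]
    _ = ENNReal.ofReal (∑' k : ℕ, (k : ℝ) * poissonPMFReal r k) :=
        (ENNReal.ofReal_tsum_of_nonneg
          (fun k => mul_nonneg (Nat.cast_nonneg k) poissonPMFReal_nonneg) hs.summable).symm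
    _ = (r : ℝ≥0∞) := by rw [hs.tsum_eq, ENNReal.ofReal_coe_nnreal]

lemma mean_Ncnt {Ω : Type*} [MeasurableSpace Ω] {P : Measure Ω} [IsProbabilityMeasure P]
    {x : Ω → ℕ → ℝ} {Λ : Measure ℝ} (hppp : IsPoissonPP P x Λ)
    {B : Set ℝ} (hB : MeasurableSet B) (hfin : Λ B ≠ ⊤) :
    ∫⁻ ω, Ncnt x B ω ∂P = Λ B := by
  set r : ℝ≥0 := (Λ B).toNNReal with hrdef
  have hrΛ : (r : ℝ≥0∞) = Λ B := ENNReal.coe_toNNReal hfin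
  have hrtoReal : (Λ B).toReal = (r : ℝ) := rfl
  set E : ℕ → Set Ω := fun k => Ncnt x B ⁻¹' {(k : ℝ≥0∞)} with hEdef
  have hNmeas : Measurable (Ncnt x B) := measurable_Ncnt hppp.meas hB
  have hEk : ∀ k, MeasurableSet (E k) := fun k => hNmeas (measurableSet_singleton _)
  have hdisj : Pairwise (Function.onFun Disjoint E) := by
    intro k j hkj
    exact Disjoint.preimage _ (Set.disjoint_singleton.mpr (fun h => hkj (Nat.cast_inj.mp h)))
  have hlaw : ∀ k : ℕ, P (E k) = ENNReal.ofReal (poissonPMFReal r k) := by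
    intro k
    rw [show E k = {ω | ppCount x B ω = (k : ℕ∞)} from (ppCount_event_eq x B k).symm,
      hppp.law B hB hfin k]
    congr 1
  have hsum : ∑' k : ℕ, P (E k) = 1 := by
    simp_rw [hlaw]
    rw [← ENNReal.ofReal_tsum_of_nonneg (fun k => poissonPMFReal_nonneg)
      (poissonPMFRealSum r).summable, (show HasSum (fun n => poissonPMFReal r n) 1 from poissonPMFRealSum r).tsum_eq, ENNReal.ofReal_one]
  have hUmeas : MeasurableSet (⋃ k, E k) := MeasurableSet.iUnion hEk
  have hU : P (⋃ k, E k) = 1 := by rw [measure_iUnion hdisj hEk, hsum]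
  have hUc : P (⋃ k, E k)ᶜ = 0 := by
    rw [measure_compl hUmeas (measure_ne_top P _), hU, measure_univ, tsub_self]
  calc ∫⁻ ω, Ncnt x B ω ∂P
      = ∫⁻ ω in ⋃ k, E k, Ncnt x B ω ∂P + ∫⁻ ω in (⋃ k, E k)ᶜ, Ncnt x B ω ∂P :=
        (lintegral_add_compl _ hUmeas).symm
    _ = ∑' k : ℕ, ∫⁻ ω in E k, Ncnt x B ω ∂P := by
        rw [setLIntegral_measure_zero _ _ hUc, add_zero, lintegral_iUnion hEk hdisj]
    _ = ∑' k : ℕ, (k : ℝ≥0∞) * P (E k) := by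
        refine tsum_congr fun k => ?_
        rw [setLIntegral_congr_fun (hEk k) (fun ω hω => hω),
          setLIntegral_const]
    _ = Λ B := by
        simp_rw [hlaw]
        rw [poisson_mean r, hrΛ]

lemma campbell {Ω : Type*} [MeasurableSpace Ω] {P : Measure Ω} [IsProbabilityMeasure P]
    {x : Ω → ℕ → ℝ} {Λ : Measure ℝ} (hppp : IsPoissonPP P x Λ)
    {G : ℝ → ℝ} (hG : Measurable G) (hG0 : ∀ t, 0 ≤ G t)
    (hfin : ∀ s : ℝ, 0 < s → Λ {t | s < G t} ≠ ⊤) :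
    ∫⁻ ω, (∑' α : ℕ, ENNReal.ofReal (G (x ω α))) ∂P = ∫⁻ t, ENNReal.ofReal (G t) ∂Λ := by
  have hBmeas : ∀ s : ℝ, MeasurableSet {t | s < G t} := fun s =>
    measurableSet_lt measurable_const hG
  have step1 : ∀ ω, (∑' α : ℕ, ENNReal.ofReal (G (x ω α))) =
      ∫⁻ s in Set.Ioi (0 : ℝ), Ncnt x {t | s < G t} ω := by
    intro ω
    rw [← MeasureTheory.lintegral_count (fun α => ENNReal.ofReal (G (x ω α))),
      lintegral_eq_lintegral_meas_lt Measure.count (ae_of_all _ fun α => hG0 _)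
        (measurable_from_top.aemeasurable)]
    refine lintegral_congr fun s => ?_
    rw [Measure.count_apply (MeasurableSet.of_discrete), ← ENNReal.tsum_set_one,
      tsum_subtype {α : ℕ | s < G (x ω α)} (fun _ => (1 : ℝ≥0∞))]
    unfold Ncnt
    refine tsum_congr fun α => ?_
    by_cases h : s < G (x ω α) <;>
      simp [Set.indicator_of_mem, Set.indicator_of_notMem, h, Set.mem_setOf_eq]
  have hjm : Measurable (Function.uncurry fun ω (s : ℝ) => Ncnt x {t | s < G t} ω) := by
    refine Measurable.ennreal_tsum fun α => ?_
    have hset : MeasurableSet {p : Ω × ℝ | p.2 < G (x p.1 α)} :=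
      measurableSet_lt measurable_snd ((hG.comp (hppp.meas α)).comp measurable_fst)
    have : (Function.uncurry fun ω (s : ℝ) =>
        ({t | s < G t} : Set ℝ).indicator (fun _ => (1 : ℝ≥0∞)) (x ω α)) =
        fun p : Ω × ℝ => ({p : Ω × ℝ | p.2 < G (x p.1 α)}).indicator
          (fun _ => (1 : ℝ≥0∞)) p := by
      funext p
      by_cases h : p.2 < G (x p.1 α) <;>
        simp [Function.uncurry, Set.indicator_apply, Set.mem_setOf_eq, h]
    exact this ▸ (measurable_const.indicator hset)
  simp_rw [step1]
  rw [lintegral_lintegral_swap hjm.aemeasurable]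
  rw [setLIntegral_congr_fun measurableSet_Ioi
    (fun s hs => mean_Ncnt hppp (hBmeas s) (hfin s hs))]
  exact (lintegral_eq_lintegral_meas_lt Λ (ae_of_all _ hG0) hG.aemeasurable).symm

lemma my_tsum_rpow_le {f : ℕ → ℝ≥0∞} {p : ℝ} (hp0 : 0 < p) (hp1 : p ≤ 1) :
    (∑' n, f n) ^ p ≤ ∑' n, f n ^ p := by
  have hfin : ∀ s : Finset ℕ, (∑ n ∈ s, f n) ^ p ≤ ∑ n ∈ s, f n ^ p := by
    intro s
    induction s using Finset.cons_induction with
    | empty => simp [ENNReal.zero_rpow_of_pos hp0]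
    | cons a s ha ih =>
        rw [Finset.sum_cons, Finset.sum_cons]
        exact le_trans (ENNReal.rpow_add_le_add_rpow _ _ hp0.le hp1)
          (add_le_add le_rfl ih)
  have key : ∑' n, f n ≤ (∑' n, f n ^ p) ^ (1 / p) := by
    rw [ENNReal.tsum_eq_iSup_sum]
    refine iSup_le fun s => ?_
    calc ∑ n ∈ s, f n = ((∑ n ∈ s, f n) ^ p) ^ (1 / p) := by
          rw [← ENNReal.rpow_mul, mul_one_div, div_self hp0.ne', ENNReal.rpow_one]
      _ ≤ ((∑ n ∈ s, f n ^ p)) ^ (1 / p) :=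
          ENNReal.rpow_le_rpow (hfin s) (by positivity)
      _ ≤ (∑' n, f n ^ p) ^ (1 / p) :=
          ENNReal.rpow_le_rpow (ENNReal.sum_le_tsum s) (by positivity)
  calc (∑' n, f n) ^ p ≤ ((∑' n, f n ^ p) ^ (1 / p)) ^ p :=
        ENNReal.rpow_le_rpow key hp0.le
    _ = ∑' n, f n ^ p := by
        rw [← ENNReal.rpow_mul, one_div, inv_mul_cancel₀ hp0.ne', ENNReal.rpow_one]

lemma intcalc_Ioi {c : ℝ} (k : ℝ) (hc : 0 < c) (hk : 0 ≤ k) :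
    ∫⁻ t in Set.Ioi (0 : ℝ), ENNReal.ofReal (k * Real.exp (-(c * t))) =
      ENNReal.ofReal (k / c) := by
  have hint : IntegrableOn (fun t : ℝ => k * Real.exp (-(c * t))) (Set.Ioi 0) := by
    have h := (exp_neg_integrableOn_Ioi 0 hc).const_mul k
    simpa [neg_mul, IntegrableOn] using h
  rw [← MeasureTheory.ofReal_integral_eq_lintegral_ofReal hint
    (ae_of_all _ fun t => by positivity)]
  congr 1
  rw [MeasureTheory.integral_const_mul]
  have h := integral_comp_mul_left_Ioi (fun y => Real.exp (-y)) 0 hc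
  rw [mul_zero] at h
  rw [show (fun t : ℝ => Real.exp (-(c * t))) = fun t : ℝ => Real.exp (-(c * t)) from rfl]
  calc k * ∫ t in Set.Ioi (0:ℝ), Real.exp (-(c * t))
      = k * (c⁻¹ • ∫ y in Set.Ioi (0:ℝ), Real.exp (-y)) := by rw [h]
    _ = k / c := by
        rw [integral_exp_neg_Ioi_zero, smul_eq_mul, mul_one, div_eq_mul_inv]

lemma intcalc_Iic {c : ℝ} (k : ℝ) (hc : 0 < c) (hk : 0 ≤ k) :
    ∫⁻ t in Set.Iic (0 : ℝ), ENNReal.ofReal (k * Real.exp (c * t)) =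
      ENNReal.ofReal (k / c) := by
  have hF : Measurable fun t : ℝ => ENNReal.ofReal (k * Real.exp (c * t)) :=
    ENNReal.measurable_ofReal.comp (measurable_const.mul ((measurable_const.mul
      measurable_id).exp))
  have hmap : Measure.map Neg.neg (volume : Measure ℝ) = volume :=
    Measure.map_neg_eq_self volume
  have hpre : (Neg.neg ⁻¹' Set.Iic (0 : ℝ)) = Set.Ici 0 := by
    ext t; simp
  calc ∫⁻ t in Set.Iic (0 : ℝ), ENNReal.ofReal (k * Real.exp (c * t))
      = ∫⁻ t in Set.Iic (0 : ℝ), ENNReal.ofReal (k * Real.exp (c * t))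
          ∂(Measure.map Neg.neg volume) := by rw [hmap]
    _ = ∫⁻ t in Neg.neg ⁻¹' Set.Iic (0 : ℝ), ENNReal.ofReal (k * Real.exp (c * -t)) := by
        rw [setLIntegral_map measurableSet_Iic hF measurable_neg]
    _ = ∫⁻ t in Set.Ici (0 : ℝ), ENNReal.ofReal (k * Real.exp (-(c * t))) := by
        rw [hpre]
        refine lintegral_congr fun t => ?_
        ring_nf
    _ = ∫⁻ t in Set.Ioi (0 : ℝ), ENNReal.ofReal (k * Real.exp (-(c * t))) :=
        setLIntegral_congr (Ioi_ae_eq_Ici (μ := volume) (a := (0:ℝ))).symm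
    _ = ENNReal.ofReal (k / c) := intcalc_Ioi k hc hk



theorem stmt10 {Ω : Type*} [MeasurableSpace Ω] (P : Measure Ω) [IsProbabilityMeasure P]
    (m a : ℝ) (hm1 : m < 1) (ha0 : 0 < a) (ham : a < m) (x : Ω → ℕ → ℝ)
    (hppp : IsPoissonPP P x (expIntensityM m)) :
    (∫⁻ ω, ENNReal.ofReal ((∑' α : ℕ, Real.exp (x ω α)) ^ a) ∂P) < ⊤ ∧
    (∫⁻ ω, ENNReal.ofReal ((∑' α : ℕ, Real.exp (x ω α)) ^ a) ∂P)
      ≤ ENNReal.ofReal (m / (m - a) + 1 + m / (1 - m)) := by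
  have hm0 : 0 < m := ha0.trans ham
  have ha1 : a < 1 := ham.trans hm1
  have hma : 0 < m - a := sub_pos.mpr ham
  have h1m : 0 < 1 - m := sub_pos.mpr hm1
  set Λm := expIntensityM m with hΛdef
  have hden : Measurable fun t : ℝ => ENNReal.ofReal (m * Real.exp (-(m * t))) :=
    ENNReal.measurable_ofReal.comp
      (measurable_const.mul ((measurable_const.mul measurable_id).neg.exp))
  set G1 : ℝ → ℝ := fun t => if 0 < t then Real.exp (a * t) else 0 with hG1def
  set g1 : ℝ → ℝ := fun t => if 0 < t then Real.exp t else 0 with hg1def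
  set g2 : ℝ → ℝ := fun t => if t ≤ 0 then Real.exp t else 0 with hg2def
  have hG1meas : Measurable G1 :=
    Measurable.ite measurableSet_Ioi ((measurable_const.mul measurable_id).exp)
      measurable_const
  have hg2meas : Measurable g2 :=
    Measurable.ite measurableSet_Iic Real.measurable_exp measurable_const
  have hG1nn : ∀ t, 0 ≤ G1 t := by
    intro t; simp only [hG1def]
    split <;> [exact (Real.exp_pos _).le; exact le_rfl]
  have hg2nn : ∀ t, 0 ≤ g2 t := by
    intro t; simp only [hg2def]
    split <;> [exact (Real.exp_pos _).le; exact le_rfl]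
  have hΛIoi : Λm (Set.Ioi 0) = ENNReal.ofReal (m / m) := by
    rw [hΛdef, expIntensityM, withDensity_apply _ measurableSet_Ioi]
    exact intcalc_Ioi m hm0 hm0.le
  have hfin1 : ∀ s : ℝ, 0 < s → Λm {t | s < G1 t} ≠ ⊤ := by
    intro s hs h
    have hsub : {t | s < G1 t} ⊆ Set.Ioi 0 := by
      intro t ht
      simp only [Set.mem_setOf_eq, hG1def] at ht
      rw [Set.mem_Ioi]
      by_contra hc
      rw [if_neg hc] at ht
      exact absurd (hs.trans ht) (lt_irrefl (0 : ℝ))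
    have : (⊤ : ℝ≥0∞) ≤ ENNReal.ofReal (m / m) := h ▸ (measure_mono hsub).trans hΛIoi.le
    exact ENNReal.ofReal_ne_top (top_le_iff.mp this)
  have hfin2 : ∀ s : ℝ, 0 < s → Λm {t | s < g2 t} ≠ ⊤ := by
    intro s hs
    have hsub : {t | s < g2 t} ⊆ Set.Ioc (Real.log s) 0 := by
      intro t ht
      simp only [Set.mem_setOf_eq, hg2def] at ht
      by_cases h : t ≤ 0
      · rw [if_pos h] at ht
        exact ⟨(Real.log_lt_iff_lt_exp hs).mpr ht, h⟩
      · rw [if_neg h] at ht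
        exact absurd (hs.trans ht) (lt_irrefl (0 : ℝ))
    have hb : Λm (Set.Ioc (Real.log s) 0) ≠ ⊤ := by
      rw [hΛdef, expIntensityM, withDensity_apply _ measurableSet_Ioc]
      have hle : ∫⁻ t in Set.Ioc (Real.log s) 0, ENNReal.ofReal (m * Real.exp (-(m * t)))
          ≤ ∫⁻ _ in Set.Ioc (Real.log s) 0,
              ENNReal.ofReal (m * Real.exp (-(m * Real.log s))) := by
        refine setLIntegral_mono' measurableSet_Ioc fun t ht => ?_
        refine ENNReal.ofReal_le_ofReal (mul_le_mul_of_nonneg_left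
          (Real.exp_le_exp.mpr ?_) hm0.le)
        have := mul_le_mul_of_nonneg_left ht.1.le hm0.le
        linarith
      refine ne_top_of_le_ne_top ?_ hle
      rw [setLIntegral_const]
      exact ENNReal.mul_ne_top ENNReal.ofReal_ne_top
        (by rw [Real.volume_Ioc]; exact ENNReal.ofReal_ne_top)
    exact fun h => hb (top_le_iff.mp (h ▸ measure_mono hsub))
  have hV1 : ∫⁻ t, ENNReal.ofReal (G1 t) ∂Λm = ENNReal.ofReal (m / (m - a)) := by
    have hind : (fun t => ENNReal.ofReal (G1 t)) =
        (Set.Ioi (0:ℝ)).indicator fun t => ENNReal.ofReal (Real.exp (a * t)) := by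
      funext t
      by_cases h : 0 < t <;>
        simp [hG1def, h, Set.indicator_apply, Set.mem_Ioi]
    have hgm : Measurable fun t : ℝ => ENNReal.ofReal (Real.exp (a * t)) :=
      ENNReal.measurable_ofReal.comp ((measurable_const.mul measurable_id).exp)
    rw [hind, lintegral_indicator measurableSet_Ioi, hΛdef, expIntensityM,
      setLIntegral_withDensity_eq_setLIntegral_mul volume hden hgm measurableSet_Ioi]
    calc ∫⁻ t in Set.Ioi (0:ℝ), ((fun t => ENNReal.ofReal (m * Real.exp (-(m * t)))) *
            fun t => ENNReal.ofReal (Real.exp (a * t))) t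
        = ∫⁻ t in Set.Ioi (0:ℝ), ENNReal.ofReal (m * Real.exp (-((m - a) * t))) := by
          refine lintegral_congr fun t => ?_
          simp only [Pi.mul_apply]
          rw [← ENNReal.ofReal_mul (by positivity)]
          congr 1
          rw [mul_assoc, ← Real.exp_add]
          congr 1
          ring
      _ = ENNReal.ofReal (m / (m - a)) := intcalc_Ioi m hma hm0.le
  have hV2 : ∫⁻ t, ENNReal.ofReal (g2 t) ∂Λm = ENNReal.ofReal (m / (1 - m)) := by
    have hind : (fun t => ENNReal.ofReal (g2 t)) =
        (Set.Iic (0:ℝ)).indicator fun t => ENNReal.ofReal (Real.exp t) := by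
      funext t
      by_cases h : t ≤ 0 <;>
        simp [hg2def, h, Set.indicator_apply, Set.mem_Iic]
    have hgm : Measurable fun t : ℝ => ENNReal.ofReal (Real.exp t) :=
      ENNReal.measurable_ofReal.comp Real.measurable_exp
    rw [hind, lintegral_indicator measurableSet_Iic, hΛdef, expIntensityM,
      setLIntegral_withDensity_eq_setLIntegral_mul volume hden hgm measurableSet_Iic]
    calc ∫⁻ t in Set.Iic (0:ℝ), ((fun t => ENNReal.ofReal (m * Real.exp (-(m * t)))) *
            fun t => ENNReal.ofReal (Real.exp t)) t
        = ∫⁻ t in Set.Iic (0:ℝ), ENNReal.ofReal (m * Real.exp ((1 - m) * t)) := by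
          refine lintegral_congr fun t => ?_
          simp only [Pi.mul_apply]
          rw [← ENNReal.ofReal_mul (by positivity)]
          congr 1
          rw [mul_assoc, ← Real.exp_add]
          congr 1
          ring
      _ = ENNReal.ofReal (m / (1 - m)) := intcalc_Iic m h1m hm0.le
  have hpoint : ∀ ω, ENNReal.ofReal ((∑' α : ℕ, Real.exp (x ω α)) ^ a) ≤
      (∑' α : ℕ, ENNReal.ofReal (G1 (x ω α))) +
        (1 + ∑' α : ℕ, ENNReal.ofReal (g2 (x ω α))) := by
    intro ω
    set F : ℝ≥0∞ := ∑' α : ℕ, ENNReal.ofReal (Real.exp (x ω α)) with hFdef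
    set S1 : ℝ≥0∞ := ∑' α : ℕ, ENNReal.ofReal (g1 (x ω α)) with hS1def
    set S2 : ℝ≥0∞ := ∑' α : ℕ, ENNReal.ofReal (g2 (x ω α)) with hS2def
    have h0 : ENNReal.ofReal ((∑' α : ℕ, Real.exp (x ω α)) ^ a) ≤ F ^ a := by
      by_cases hsum : Summable fun α : ℕ => Real.exp (x ω α)
      · have hF : F = ENNReal.ofReal (∑' α : ℕ, Real.exp (x ω α)) :=
          (ENNReal.ofReal_tsum_of_nonneg (fun α => (Real.exp_pos _).le) hsum).symm
        rw [hF, ENNReal.ofReal_rpow_of_nonneg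
          (tsum_nonneg fun α => (Real.exp_pos _).le) ha0.le]
      · rw [tsum_eq_zero_of_not_summable hsum, Real.zero_rpow ha0.ne', ENNReal.ofReal_zero]
        exact zero_le
    have hsplit : F = S1 + S2 := by
      rw [hFdef, hS1def, hS2def, ← ENNReal.tsum_add]
      refine tsum_congr fun α => ?_
      simp only [hg1def, hg2def]
      by_cases h : 0 < x ω α
      · rw [if_pos h, if_neg (not_le.mpr h), ENNReal.ofReal_zero, add_zero]
      · rw [if_neg h, if_pos (not_lt.mp h), ENNReal.ofReal_zero, zero_add]
    have h1 : F ^ a ≤ S1 ^ a + S2 ^ a := by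
      rw [hsplit]; exact ENNReal.rpow_add_le_add_rpow _ _ ha0.le ha1.le
    have hS1le : S1 ^ a ≤ ∑' α : ℕ, ENNReal.ofReal (G1 (x ω α)) := by
      refine le_trans (my_tsum_rpow_le ha0 ha1.le) ?_
      refine ENNReal.tsum_le_tsum fun α => ?_
      simp only [hg1def, hG1def]
      by_cases h : 0 < x ω α
      · rw [if_pos h, if_pos h,
          ENNReal.ofReal_rpow_of_nonneg (Real.exp_pos _).le ha0.le,
          ← Real.exp_mul, mul_comm (x ω α) a]
      · rw [if_neg h, if_neg h, ENNReal.ofReal_zero, ENNReal.zero_rpow_of_pos ha0]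
    have hS2le : S2 ^ a ≤ 1 + S2 := by
      rcases le_or_gt S2 1 with h | h
      · exact le_trans (ENNReal.rpow_le_one h ha0.le) le_self_add
      · calc S2 ^ a ≤ S2 ^ (1 : ℝ) :=
              ENNReal.rpow_le_rpow_of_exponent_le h.le ha1.le
          _ = S2 := ENNReal.rpow_one _
          _ ≤ 1 + S2 := le_add_self
    exact h0.trans (h1.trans (add_le_add hS1le hS2le))
  have hC1m : Measurable fun ω => ∑' α : ℕ, ENNReal.ofReal (G1 (x ω α)) :=
    Measurable.ennreal_tsum fun α =>
      ENNReal.measurable_ofReal.comp (hG1meas.comp (hppp.meas α))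
  have hC2m : Measurable fun ω => ∑' α : ℕ, ENNReal.ofReal (g2 (x ω α)) :=
    Measurable.ennreal_tsum fun α =>
      ENNReal.measurable_ofReal.comp (hg2meas.comp (hppp.meas α))
  have hintle : ∫⁻ ω, ENNReal.ofReal ((∑' α : ℕ, Real.exp (x ω α)) ^ a) ∂P ≤
      ENNReal.ofReal (m / (m - a)) + (1 + ENNReal.ofReal (m / (1 - m))) := by
    calc ∫⁻ ω, ENNReal.ofReal ((∑' α : ℕ, Real.exp (x ω α)) ^ a) ∂P
        ≤ ∫⁻ ω, ((∑' α : ℕ, ENNReal.ofReal (G1 (x ω α))) +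
            (1 + ∑' α : ℕ, ENNReal.ofReal (g2 (x ω α)))) ∂P := lintegral_mono hpoint
      _ = (∫⁻ ω, ∑' α : ℕ, ENNReal.ofReal (G1 (x ω α)) ∂P) +
          ∫⁻ ω, (1 + ∑' α : ℕ, ENNReal.ofReal (g2 (x ω α))) ∂P :=
          lintegral_add_left hC1m _
      _ = (∫⁻ ω, ∑' α : ℕ, ENNReal.ofReal (G1 (x ω α)) ∂P) +
          (1 + ∫⁻ ω, ∑' α : ℕ, ENNReal.ofReal (g2 (x ω α)) ∂P) := by
          rw [lintegral_add_left measurable_const, lintegral_one, measure_univ]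
      _ = ENNReal.ofReal (m / (m - a)) + (1 + ENNReal.ofReal (m / (1 - m))) := by
          rw [(campbell hppp hG1meas hG1nn hfin1).trans hV1,
            (campbell hppp hg2meas hg2nn hfin2).trans hV2]
  have hofreal : ENNReal.ofReal (m / (m - a)) + (1 + ENNReal.ofReal (m / (1 - m))) =
      ENNReal.ofReal (m / (m - a) + 1 + m / (1 - m)) := by
    rw [ENNReal.ofReal_add (by positivity : (0:ℝ) ≤ m / (m - a) + 1)
        (div_nonneg hm0.le h1m.le),
      ENNReal.ofReal_add (div_nonneg hm0.le hma.le) zero_le_one,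
      ENNReal.ofReal_one, add_assoc]
  have hle2 := hintle.trans_eq hofreal
  exact ⟨lt_of_le_of_lt hle2 ENNReal.ofReal_lt_top, hle2⟩

end Aux
end
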